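/- Covariance inequality for φ-mixing: if X and Y are bounded random variables measurable with respect to sub-σ-fields 𝒜 and ℬ respectively, with |X| ≤ M_X and |Y| ≤ M_Y almost surely, then |Cov(X,Y)| ≤ 2 φ(𝒜,ℬ) M_X M_Y. -/

import Mathlib

/-!
Let `V = μ[X|ℬ]`. Pulling `Y` out of the conditional expectation gives
`Cov(X, Y) = ∫ (V - E X) Y`, so it suffices that `∫ |V - E X| ≤ 2 φ M_X`.
Splitting `Ω` along the sign of `V - E X`, a `ℬ`-measurable event, reduces this to
`|∫_B X - E X · μ(B)| ≤ φ M_X` for `B ∈ ℬ`. The same argument, with `1_B` and `X`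
in place of `X` and `Y` and `𝒜` in place of `ℬ`, reduces that in turn to
`|μ(A ∩ B) - μ(A) μ(B)| ≤ φ / 2` for `A ∈ 𝒜`: the mixing hypothesis bounds the
left side by `φ μ(B)`, and also by `φ μ(Bᶜ)`, since the deviations of `B` and `Bᶜ`
from independence of `A` are opposite.
-/

open MeasureTheory

namespace MeasureTheory

variable {Ω : Type*} {m m₀ : MeasurableSpace Ω} {μ : Measure[m₀] Ω} [IsFiniteMeasure μ]
  {f g : Ω → ℝ} {c ε M : ℝ}

lemma setIntegral_condExp_sub_const (hm : m ≤ m₀) (hf : Integrable f μ) {s : Set Ω}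
    (hs : MeasurableSet[m] s) :
    ∫ ω in s, (μ[f|m] ω - c) ∂μ = ∫ ω in s, f ω ∂μ - c * μ.real s := by
  rw [integral_sub integrable_condExp.integrableOn (integrable_const c).integrableOn,
    setIntegral_condExp hm hf hs, setIntegral_const, smul_eq_mul, mul_comm]

lemma integral_abs_condExp_sub_const_le (hm : m ≤ m₀) (hf : Integrable f μ)
    (hε : ∀ s, MeasurableSet[m] s → |∫ ω in s, f ω ∂μ - c * μ.real s| ≤ ε) :
    ∫ ω, |μ[f|m] ω - c| ∂μ ≤ 2 * ε := by
  have hV : StronglyMeasurable[m] fun ω ↦ μ[f|m] ω - c :=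
    stronglyMeasurable_condExp.sub stronglyMeasurable_const
  have hpos : MeasurableSet[m] {ω | 0 ≤ μ[f|m] ω - c} := hV.measurable measurableSet_Ici
  have hneg : MeasurableSet[m] {ω | μ[f|m] ω - c ≤ 0} := hV.measurable measurableSet_Iic
  have hε_pos := (abs_le.mp (hε _ hpos)).2
  have hε_neg := (abs_le.mp (hε _ hneg)).1
  simp_rw [← Real.norm_eq_abs]
  rw [integral_norm_eq_pos_sub_neg (f := fun ω ↦ μ[f|m] ω - c)
      (integrable_condExp.sub (integrable_const c)),
    setIntegral_condExp_sub_const hm hf hpos, setIntegral_condExp_sub_const hm hf hneg]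
  linarith

lemma integral_mul_sub_const_mul_integral_eq (hm : m ≤ m₀) (hf : Integrable f μ)
    (hg : StronglyMeasurable[m] g) (hgM : ∀ᵐ ω ∂μ, |g ω| ≤ M) :
    ∫ ω, f ω * g ω ∂μ - c * ∫ ω, g ω ∂μ = ∫ ω, (μ[f|m] ω - c) * g ω ∂μ := by
  have hg' : AEStronglyMeasurable g μ := (hg.mono hm).aestronglyMeasurable
  have hgM' : ∀ᵐ ω ∂μ, ‖g ω‖ ≤ M := by simpa only [Real.norm_eq_abs] using hgM
  have hfg : Integrable (f * g) μ := hf.mul_bdd hg' hgM'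
  have hpull : ∫ ω, f ω * g ω ∂μ = ∫ ω, μ[f|m] ω * g ω ∂μ := calc
    ∫ ω, f ω * g ω ∂μ = ∫ ω, μ[f * g|m] ω ∂μ := (integral_condExp hm).symm
    _ = ∫ ω, μ[f|m] ω * g ω ∂μ :=
      integral_congr_ae (condExp_mul_of_stronglyMeasurable_right hg hfg hf)
  simp_rw [sub_mul]
  rw [integral_sub (integrable_condExp.mul_bdd hg' hgM')
      ((Integrable.of_bound hg' M hgM').const_mul c), integral_const_mul, hpull]

theorem abs_integral_mul_sub_const_mul_integral_le [NeZero μ] (hm : m ≤ m₀)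
    (hf : Integrable f μ) (hg : StronglyMeasurable[m] g) (hgM : ∀ᵐ ω ∂μ, |g ω| ≤ M)
    (hε : ∀ s, MeasurableSet[m] s → |∫ ω in s, f ω ∂μ - c * μ.real s| ≤ ε) :
    |∫ ω, f ω * g ω ∂μ - c * ∫ ω, g ω ∂μ| ≤ 2 * M * ε := by
  obtain ⟨ω₀, hω₀⟩ := hgM.exists
  have hM : 0 ≤ M := (abs_nonneg _).trans hω₀
  have hVc : Integrable (fun ω ↦ μ[f|m] ω - c) μ := integrable_condExp.sub (integrable_const c)
  rw [integral_mul_sub_const_mul_integral_eq hm hf hg hgM]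
  calc |∫ ω, (μ[f|m] ω - c) * g ω ∂μ| ≤ ∫ ω, |(μ[f|m] ω - c) * g ω| ∂μ :=
        abs_integral_le_integral_abs
    _ ≤ ∫ ω, |μ[f|m] ω - c| * M ∂μ := by
        refine integral_mono_ae ?_ (hVc.abs.mul_const M) ?_
        · exact (hVc.mul_bdd (hg.mono hm).aestronglyMeasurable
            (by simpa only [Real.norm_eq_abs] using hgM)).abs
        · filter_upwards [hgM] with ω hω
          rw [abs_mul]
          exact mul_le_mul_of_nonneg_left hω (abs_nonneg _)
    _ = (∫ ω, |μ[f|m] ω - c| ∂μ) * M := integral_mul_const M _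
    _ ≤ 2 * ε * M := by gcongr; exact integral_abs_condExp_sub_const_le hm hf hε
    _ = 2 * M * ε := by ring

end MeasureTheory

namespace ProbabilityTheory

variable {Ω : Type*} {m₀ : MeasurableSpace Ω} {μ : Measure[m₀] Ω} [IsProbabilityMeasure μ]

lemma abs_measureReal_inter_sub_mul_le_half {𝒜 ℬ : MeasurableSpace Ω} (hℬ : ℬ ≤ m₀) {φ : ℝ}
    (hφ : ∀ A B : Set Ω, MeasurableSet[𝒜] A → MeasurableSet[ℬ] B → μ B ≠ 0 →
      |(μ (A ∩ B)).toReal / (μ B).toReal - (μ A).toReal| ≤ φ)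
    {A B : Set Ω} (hA : MeasurableSet[𝒜] A) (hB : MeasurableSet[ℬ] B) :
    |μ.real (A ∩ B) - μ.real B * μ.real A| ≤ φ / 2 := by
  have hdev : ∀ C, MeasurableSet[ℬ] C →
      |μ.real (A ∩ C) - μ.real C * μ.real A| ≤ φ * μ.real C := by
    intro C hC
    rcases eq_or_ne (μ C) 0 with h0 | h0
    · simp [measureReal_def, h0, measure_mono_null Set.inter_subset_right h0]
    · have hpos : 0 < μ.real C := ENNReal.toReal_pos h0 (measure_ne_top μ C)
      calc |μ.real (A ∩ C) - μ.real C * μ.real A|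
          = |μ.real (A ∩ C) / μ.real C - μ.real A| * μ.real C := by
            rw [← abs_of_pos hpos, ← abs_mul, abs_of_pos hpos, sub_mul,
              div_mul_cancel₀ _ hpos.ne', mul_comm]
        _ ≤ φ * μ.real C := mul_le_mul_of_nonneg_right (hφ A C hA hC h0) hpos.le
  have hBm : MeasurableSet[m₀] B := hℬ B hB
  have hsplitA : μ.real (A ∩ B) + μ.real (A ∩ Bᶜ) = μ.real A := by
    rw [← Set.sdiff_eq, measureReal_inter_add_sdiff hBm]
  have hsplitB : μ.real B + μ.real Bᶜ = 1 := by
    rw [measureReal_add_measureReal_compl hBm, probReal_univ]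
  have h₁ := hdev B hB
  have h₂ := hdev Bᶜ hB.compl
  have hopp : μ.real (A ∩ Bᶜ) - μ.real Bᶜ * μ.real A
      = -(μ.real (A ∩ B) - μ.real B * μ.real A) := by
    linear_combination hsplitA - μ.real A * hsplitB
  rw [hopp, abs_neg] at h₂
  linarith [show φ * μ.real B + φ * μ.real Bᶜ = φ by rw [← mul_add, hsplitB, mul_one]]

end ProbabilityTheory

/-- Covariance inequality for φ-mixing: if `X`, `Y` are bounded and measurable
with respect to sub-σ-fields `𝒜`, `ℬ` whose φ-mixing coefficient is at most
`φ`, then `|Cov(X,Y)| ≤ 2 φ M_X M_Y`. -/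
theorem phi_mixing_covariance {Ω : Type*} {m : MeasurableSpace Ω} (μ : Measure Ω)
    [IsProbabilityMeasure μ] (𝒜 ℬ : MeasurableSpace Ω) (h𝒜 : 𝒜 ≤ m) (hℬ : ℬ ≤ m)
    (φ MX MY : ℝ)
    (hφ : ∀ A B : Set Ω, MeasurableSet[𝒜] A → MeasurableSet[ℬ] B → μ B ≠ 0 →
      |(μ (A ∩ B)).toReal / (μ B).toReal - (μ A).toReal| ≤ φ)
    (X Y : Ω → ℝ) (hX : Measurable[𝒜] X) (hY : Measurable[ℬ] Y)
    (hXb : ∀ᵐ ω ∂μ, |X ω| ≤ MX) (hYb : ∀ᵐ ω ∂μ, |Y ω| ≤ MY) :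
    |(∫ ω, X ω * Y ω ∂μ) - (∫ ω, X ω ∂μ) * (∫ ω, Y ω ∂μ)| ≤ 2 * φ * MX * MY := by
  have hXint : Integrable X μ :=
    .of_bound (hX.mono h𝒜 le_rfl).aestronglyMeasurable MX
      (by simpa only [Real.norm_eq_abs] using hXb)
  have hXsets : ∀ B, MeasurableSet[ℬ] B →
      |∫ ω in B, X ω ∂μ - (∫ ω, X ω ∂μ) * μ.real B| ≤ MX * φ := by
    intro B hB
    have hBm : MeasurableSet[m] B := hℬ B hB
    have h := abs_integral_mul_sub_const_mul_integral_le h𝒜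
      ((integrable_const (1 : ℝ)).indicator hBm) hX.stronglyMeasurable hXb
      (c := μ.real B) (ε := φ / 2) fun A hA ↦ by
        rw [setIntegral_indicator hBm, setIntegral_const, smul_eq_mul, mul_one]
        exact ProbabilityTheory.abs_measureReal_inter_sub_mul_le_half hℬ hφ hA hB
    simp_rw [← Set.indicator_mul_left, one_mul, integral_indicator hBm,
      mul_comm (μ.real B)] at h
    linarith
  have hcov :=
    abs_integral_mul_sub_const_mul_integral_le hℬ hXint hY.stronglyMeasurable hYb hXsets
  linarith
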